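/- Let G be a finite game structure in which β^0 is the finest coarsening of the players' observations, i.e., β^0(v) = β^0(v') exactly when (v,v') lies in the equivalence relation on V generated by the pairs {(u,u') : β^i(u) = β^i(u') for some player i}. If there exists a bound k ∈ ℕ such that every play of G visits, in every window of k consecutive positions, at least one state v with β^i(v) ≠ β^i(v') for every player i and every v' ≠ v (a perfect-information state), then G has periodic certainty with bound k. -/

import Mathlib

/-- The state reached after following the word `w` (a list of (action profile, state) pairs)
starting from state `v`: the last state of `w`, or `v` if `w` is empty. -/
def endFrom {α V : Type} : V → List (α × V) → V
  | v, [] => v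
  | _, p :: w => endFrom p.2 w

/-- An `n`-player game structure with imperfect information: states `V` with an initial state,
action sets `A i` for each player, a total move relation labelled by action profiles,
observation functions `obs i : V → B i` for each player, and the observation function
`obs0 : V → B0` of the fictitious, less informed Player 0. -/
structure GameStructure (n : ℕ) (V : Type) (A : Fin n → Type) (B : Fin n → Type)
    (B0 : Type) where
  init : V
  move : V → (∀ i, A i) → V → Prop
  move_total : ∀ v a, ∃ v', move v a v'
  obs : ∀ i : Fin n, V → B i
  obs0 : V → B0

namespace GameStructure

variable {n : ℕ} {V : Type} {A : Fin n → Type} {B : Fin n → Type} {B0 : Type}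

variable (G : GameStructure n V A B B0)

/-- `G.IsHistFrom v w` holds if the word `w` describes a sequence of legal moves from `v`. -/
def IsHistFrom : V → List ((∀ i, A i) × V) → Prop
  | _, [] => True
  | v, p :: w => G.move v p.1 p.2 ∧ IsHistFrom p.2 w

/-- `w` encodes a history: a legal sequence of moves from the initial state.
The history `v₀ a₀ v₁ … a_{ℓ-1} v_ℓ` is encoded as the word `(a₀,v₁) … (a_{ℓ-1},v_ℓ)`. -/
def IsHistWord (w : List ((∀ i, A i) × V)) : Prop := G.IsHistFrom G.init w

/-- The final state of the history encoded by `w`. -/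
def endState (w : List ((∀ i, A i) × V)) : V := endFrom G.init w

/-- The sequence of Player 0's observations of the states of the history encoded by `w`
(the observation of the initial state is omitted, as it is fixed). Two histories are
`∼⁰`-indistinguishable iff their `obs0Trace`s are equal (which forces equal length). -/
def obs0Trace (w : List ((∀ i, A i) × V)) : List B0 := w.map fun p => G.obs0 p.2

/-- The grand coalition attains certainty at the history `w`: every history
`∼⁰`-indistinguishable from `w` ends at the same state. -/
def Certain (w : List ((∀ i, A i) × V)) : Prop :=
  ∀ w', G.IsHistWord w' → G.obs0Trace w' = G.obs0Trace w → G.endState w' = G.endState w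

/-- A play: an infinite legal sequence of states and action profiles from the initial state. -/
structure Play (G : GameStructure n V A B B0) where
  st : ℕ → V
  act : ℕ → ∀ i, A i
  init_eq : st 0 = G.init
  valid : ∀ k, G.move (st k) (act k) (st (k + 1))

/-- The word encoding the prefix history of length `ℓ` of the play `π`. -/
def Play.prefixWord {G : GameStructure n V A B B0} (π : G.Play) (ℓ : ℕ) :
    List ((∀ i, A i) × V) :=
  (List.range ℓ).map fun k => (π.act k, π.st (k + 1))

/-- The play `π` has recurring certainty: the grand coalition attains certainty at
infinitely many of its finite prefixes. -/
def Play.HasRecurringCertainty {G : GameStructure n V A B B0} (π : G.Play) : Prop :=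
  ∀ m : ℕ, ∃ ℓ, m ≤ ℓ ∧ G.Certain (π.prefixWord ℓ)

/-- The game structure `G` has recurring certainty: every play does. -/
def RecurringCertainty : Prop := ∀ π : G.Play, π.HasRecurringCertainty

/-- `G` has periodic certainty with bound `t`: along every play, every prefix history can be
extended by at most `t` further rounds, within the play, to a history at which the grand
coalition attains certainty. -/
def PeriodicWithBound (t : ℕ) : Prop :=
  ∀ π : G.Play, ∀ m : ℕ, ∃ ℓ, m ≤ ℓ ∧ ℓ ≤ m + t ∧ G.Certain (π.prefixWord ℓ)

/-- `G` has periodic certainty: periodic certainty with some uniform bound `t`. -/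
def PeriodicCertainty : Prop := ∃ t, G.PeriodicWithBound t

end GameStructure

/-- A perfect-information state: every player distinguishes `v` from every other state. -/
def GameStructure.PerfectInfo {n : ℕ} {V : Type} {A : Fin n → Type} {B : Fin n → Type}
    {B0 : Type} (G : GameStructure n V A B B0) (v : V) : Prop :=
  ∀ i : Fin n, ∀ v' : V, v' ≠ v → G.obs i v' ≠ G.obs i v

/-!
At a perfect-information state `v`, no player's observation relates `v` to any other state, so the
equivalence class of `v` under the relation generated by the players' observations is `{v}`; as
`obs0` is the finest coarsening, `v` is the only state with Player 0's observation of `v`. The last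
observation of a history determines Player 0's observation of its final state, so every history
`∼⁰`-indistinguishable from a history ending at `v` ends at `v` too. Every window of `k` rounds of a
play contains such a history.
-/

theorem Relation.EqvGen.iff_of_invariant {α : Type*} {r : α → α → Prop} {p : α → Prop}
    (hp : ∀ a b, r a b → (p a ↔ p b)) {a b : α} (h : Relation.EqvGen r a b) : p a ↔ p b :=
  (InvImage.equivalence Iff p ⟨Iff.refl, Iff.symm, Iff.trans⟩).eqvGen_iff.mp
    (Relation.EqvGen.mono hp a b h)

theorem endFrom_eq_getLastD {α V : Type} (v : V) (w : List (α × V)) :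
    endFrom v w = (w.map Prod.snd).getLastD v := by
  induction w generalizing v with
  | nil => rfl
  | cons p w ih => simp only [endFrom, List.map_cons, List.getLastD_cons]; exact ih p.2

namespace GameStructure

variable {n : ℕ} {V : Type} {A : Fin n → Type} {B : Fin n → Type} {B0 : Type}
  {G : GameStructure n V A B B0}

theorem obs0_endState (w : List ((∀ i, A i) × V)) :
    G.obs0 (G.endState w) = (G.obs0Trace w).getLastD (G.obs0 G.init) := by
  rw [endState, endFrom_eq_getLastD, ← List.getLastD_map (f := G.obs0), List.map_map]
  rfl

theorem certain_of_obs0_eq_imp_eq {w : List ((∀ i, A i) × V)}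
    (h : ∀ u, G.obs0 u = G.obs0 (G.endState w) → u = G.endState w) : G.Certain w := by
  intro w' _ htrace
  apply h
  rw [obs0_endState, htrace, ← obs0_endState]

theorem Play.endState_prefixWord (π : G.Play) (ℓ : ℕ) : G.endState (π.prefixWord ℓ) = π.st ℓ := by
  rw [endState, endFrom_eq_getLastD]
  cases ℓ with
  | zero => simp [Play.prefixWord, π.init_eq]
  | succ ℓ => simp [Play.prefixWord, List.range_succ]

theorem PerfectInfo.eq_of_eqvGen {v u : V} (hv : G.PerfectInfo v)
    (h : Relation.EqvGen (fun u u' => ∃ i, G.obs i u = G.obs i u') u v) : u = v := by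
  refine (h.iff_of_invariant (p := (· = v)) ?_).mpr rfl
  rintro a b ⟨i, hab⟩
  constructor
  · rintro rfl
    by_contra hb
    exact hv i b hb hab.symm
  · rintro rfl
    by_contra ha
    exact hv i a ha hab

end GameStructure

theorem periodicWithBound_of_perfect_information_windows_general
    {n : ℕ} {V : Type} {A : Fin n → Type} {B : Fin n → Type} {B0 : Type}
    (G : GameStructure n V A B B0)
    (hfine : ∀ v v' : V, G.obs0 v = G.obs0 v' ↔
      Relation.EqvGen (fun u u' => ∃ i, G.obs i u = G.obs i u') v v')
    (k : ℕ)
    (hwin : ∀ π : G.Play, ∀ m : ℕ, ∃ j, m ≤ j ∧ j < m + k ∧ G.PerfectInfo (π.st j)) :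
    G.PeriodicWithBound k := by
  intro π m
  obtain ⟨j, hmj, hjk, hperfect⟩ := hwin π m
  refine ⟨j, hmj, hjk.le, GameStructure.certain_of_obs0_eq_imp_eq fun u hu => ?_⟩
  rw [π.endState_prefixWord] at hu ⊢
  exact hperfect.eq_of_eqvGen ((hfine u _).mp hu)

/-- If Player 0's observation is the finest coarsening of the players' observations and there
is a bound `k` such that every play visits a perfect-information state in every window of `k`
consecutive positions, then the game structure has periodic certainty with bound `k`. -/
theorem periodicWithBound_of_perfect_information_windows
    {n : ℕ} {V : Type} {A : Fin n → Type} {B : Fin n → Type} {B0 : Type}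
    (hn : 1 ≤ n) [Fintype V] [∀ i, Fintype (A i)] [∀ i, Nonempty (A i)]
    [∀ i, Fintype (B i)] [Fintype B0]
    (G : GameStructure n V A B B0)
    (hfine : ∀ v v' : V, G.obs0 v = G.obs0 v' ↔
      Relation.EqvGen (fun u u' => ∃ i, G.obs i u = G.obs i u') v v')
    (k : ℕ)
    (hwin : ∀ π : G.Play, ∀ m : ℕ, ∃ j, m ≤ j ∧ j < m + k ∧ G.PerfectInfo (π.st j)) :
    G.PeriodicWithBound k :=
  periodicWithBound_of_perfect_information_windows_general G hfine k hwin
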